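/- arXiv:0908.0897 — 5 statements merged into one kernel-verified Lean document; each statement's English description precedes it below -/
import Mathlib

section
/- If (A_n) is a sequence of measurable sets with 0 < π(A_n) < 1 and k(A_n) → 2, then π(A_n) → 1/2. -/
open MeasureTheory ProbabilityTheory

/-- The `n`-step transition kernel (`n`-fold composition of `κ`). -/
noncomputable def kpow {Ω : Type*} [MeasurableSpace Ω] (κ : Kernel Ω Ω) : ℕ → Kernel Ω Ω
  | 0 => Kernel.id
  | n + 1 => (kpow κ n) ∘ₖ κ

/-- The probability flow out of the set `A`: `∫_A p(x, Aᶜ) π(dx)`. -/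
noncomputable def flow {Ω : Type*} [MeasurableSpace Ω] (κ : Kernel Ω Ω) (π : Measure Ω)
    (A : Set Ω) : ℝ :=
  (∫⁻ x in A, κ x Aᶜ ∂π).toReal

/-- The isoperimetric quantity `k(A) = (1/(π(A)π(Aᶜ))) ∫_A p(x, Aᶜ) π(dx)`. -/
noncomputable def isoQ {Ω : Type*} [MeasurableSpace Ω] (κ : Kernel Ω Ω) (π : Measure Ω)
    (A : Set Ω) : ℝ :=
  flow κ π A / ((π A).toReal * (π Aᶜ).toReal)

/-- Reversibility: `π(dx)p(x,dy) = π(dy)p(y,dx)`. -/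
def Reversible {Ω : Type*} [MeasurableSpace Ω] (κ : Kernel Ω Ω) (π : Measure Ω) : Prop :=
  ∀ A B : Set Ω, MeasurableSet A → MeasurableSet B →
    ∫⁻ x in A, κ x B ∂π = ∫⁻ x in B, κ x A ∂π

/-- `k_n := inf over A with 0 < π(A) < 1 of k_n(A)`, the `n`-step isoperimetric constant. -/
noncomputable def kinfN {Ω : Type*} [MeasurableSpace Ω] (κ : Kernel Ω Ω) (π : Measure Ω)
    (n : ℕ) : ℝ :=
  sInf ((fun A => isoQ (kpow κ n) π A) ''
    {A : Set Ω | MeasurableSet A ∧ 0 < π A ∧ π A < 1})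

/-- `K := sup over A with 0 < π(A) < 1 of k(A)`. -/
noncomputable def Ksup {Ω : Type*} [MeasurableSpace Ω] (κ : Kernel Ω Ω) (π : Measure Ω) : ℝ :=
  sSup ((fun A => isoQ κ π A) ''
    {A : Set Ω | MeasurableSet A ∧ 0 < π A ∧ π A < 1})

/-!
Stationarity bounds the flow out of `A` by `π(Aᶜ)`, and the Markov property bounds it by `π(A)`;
hence `k(A) ≤ 1 / max(π A, π Aᶜ) ≤ 2 - 2 |π A - 1/2|`, so `k(Aₙ) → 2` squeezes `π(Aₙ)` to `1/2`.
-/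

open Filter Topology

lemma min_div_mul_le_inv_max {a b : ℝ} (ha : 0 ≤ a) (hb : 0 ≤ b) :
    min a b / (a * b) ≤ (max a b)⁻¹ := by
  rcases (le_min ha hb).eq_or_lt with hmin | hmin
  · rw [← hmin, zero_div]
    positivity
  · rw [← min_mul_max a b, div_mul_cancel_left₀ hmin.ne']

lemma inv_max_le_two_sub_two_mul_abs_sub_half {a : ℝ} (ha₀ : 0 ≤ a) (ha₁ : a ≤ 1) :
    (max a (1 - a))⁻¹ ≤ 2 - 2 * |a - 1 / 2| := by
  rcases le_total a (1 / 2) with h | h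
  · rw [max_eq_right (by linarith), abs_of_nonpos (by linarith),
      inv_le_iff_one_le_mul₀ (by linarith)]
    nlinarith
  · rw [max_eq_left (by linarith), abs_of_nonneg (by linarith),
      inv_le_iff_one_le_mul₀ (by linarith)]
    nlinarith

section Flow

variable {Ω : Type*} [MeasurableSpace Ω] (κ : Kernel Ω Ω) (π : Measure Ω)

lemma flow_le_measure [IsMarkovKernel κ] [IsFiniteMeasure π] (A : Set Ω) :
    flow κ π A ≤ (π A).toReal := by
  refine ENNReal.toReal_mono (measure_ne_top π A) ?_
  calc ∫⁻ x in A, κ x Aᶜ ∂π ≤ ∫⁻ _ in A, 1 ∂π := lintegral_mono fun _ => prob_le_one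
    _ = π A := by simp

lemma flow_le_measure_compl [IsFiniteMeasure π]
    (hinv : ∀ B : Set Ω, MeasurableSet B → π B = ∫⁻ x, κ x B ∂π)
    {A : Set Ω} (hA : MeasurableSet A) :
    flow κ π A ≤ (π Aᶜ).toReal := by
  refine ENNReal.toReal_mono (measure_ne_top π Aᶜ) ?_
  rw [hinv Aᶜ hA.compl]
  exact lintegral_mono' Measure.restrict_le_self le_rfl

lemma isoQ_le_two_sub_two_mul_abs_sub_half [IsMarkovKernel κ] [IsProbabilityMeasure π]
    (hinv : ∀ B : Set Ω, MeasurableSet B → π B = ∫⁻ x, κ x B ∂π)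
    {A : Set Ω} (hA : MeasurableSet A) :
    isoQ κ π A ≤ 2 - 2 * |(π A).toReal - 1 / 2| := by
  have hcompl : (π Aᶜ).toReal = 1 - (π A).toReal := probReal_compl_eq_one_sub hA
  have hflow : flow κ π A ≤ min (π A).toReal (π Aᶜ).toReal :=
    le_min (flow_le_measure κ π A) (flow_le_measure_compl κ π hinv hA)
  calc isoQ κ π A ≤ min (π A).toReal (π Aᶜ).toReal / ((π A).toReal * (π Aᶜ).toReal) :=
        div_le_div_of_nonneg_right hflow (by positivity)
    _ ≤ (max (π A).toReal (π Aᶜ).toReal)⁻¹ := min_div_mul_le_inv_max (by positivity) (by positivity)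
    _ ≤ 2 - 2 * |(π A).toReal - 1 / 2| := by
        rw [hcompl]
        exact inv_max_le_two_sub_two_mul_abs_sub_half ENNReal.toReal_nonneg measureReal_le_one

end Flow

theorem tendsto_measure_half_of_isoQ_tendsto_two_general {Ω : Type*} [MeasurableSpace Ω]
    (κ : Kernel Ω Ω) [IsMarkovKernel κ] (π : Measure Ω) [IsProbabilityMeasure π]
    (hinv : ∀ B : Set Ω, MeasurableSet B → π B = ∫⁻ x, κ x B ∂π)
    (A : ℕ → Set Ω) (hA : ∀ n, MeasurableSet (A n))
    (hk : Filter.Tendsto (fun n => isoQ κ π (A n)) Filter.atTop (nhds 2)) :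
    Filter.Tendsto (fun n => (π (A n)).toReal) Filter.atTop (nhds (1 / 2)) := by
  have hdist : ∀ n, dist (π (A n)).toReal (1 / 2) ≤ 1 - isoQ κ π (A n) / 2 := fun n => by
    rw [Real.dist_eq]
    linarith [isoQ_le_two_sub_two_mul_abs_sub_half κ π hinv (hA n)]
  have hgap : Tendsto (fun n => 1 - isoQ κ π (A n) / 2) atTop (𝓝 0) := by
    simpa using (hk.div_const 2).const_sub 1
  exact tendsto_iff_dist_tendsto_zero.2 (squeeze_zero (fun _ => dist_nonneg) hdist hgap)

/-- If `k(Aₙ) → 2` then `π(Aₙ) → 1/2`. -/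
theorem tendsto_measure_half_of_isoQ_tendsto_two {Ω : Type*} [MeasurableSpace Ω]
    (κ : Kernel Ω Ω) [IsMarkovKernel κ] (π : Measure Ω) [IsProbabilityMeasure π]
    (hinv : ∀ B : Set Ω, MeasurableSet B → π B = ∫⁻ x, κ x B ∂π)
    (hK : Ksup κ π = 2)
    (A : ℕ → Set Ω) (hA : ∀ n, MeasurableSet (A n))
    (h0 : ∀ n, 0 < π (A n)) (h1 : ∀ n, π (A n) < 1)
    (hk : Filter.Tendsto (fun n => isoQ κ π (A n)) Filter.atTop (nhds 2)) :
    Filter.Tendsto (fun n => (π (A n)).toReal) Filter.atTop (nhds (1 / 2)) :=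
  tendsto_measure_half_of_isoQ_tendsto_two_general κ π hinv A hA hk
end

section
/- For every measurable set A with 0 < π(A) < 1, one has π(A)π(Aᶜ) k_2(A) ≤ 1 − 2∫_A p(x, Aᶜ) π(dx), where k_2(A) := (1/(π(A)π(Aᶜ))) ∫_A p^2(x, Aᶜ) π(dx) and p^2 is the two-step kernel. -/
open MeasureTheory ProbabilityTheory

/-!
Run the chain `X₀ ∼ π, X₁, X₂`. The events `{X₀ ∈ A, X₂ ∉ A}`, `{X₀ ∉ A, X₁ ∈ A}` and
`{X₁ ∉ A, X₂ ∈ A}` are pairwise disjoint, so their probabilities add up to at most `1`. The first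
one is `π(A)π(Aᶜ)k₂(A)`; by stationarity the second and third are both the flow into `A`, which
equals the flow `∫_A p(x, Aᶜ) π(dx)` out of `A`.
-/

open scoped ENNReal

lemma kpow_two {Ω : Type*} [MeasurableSpace Ω] (κ : Kernel Ω Ω) : kpow κ 2 = κ ∘ₖ κ := by
  change (Kernel.id ∘ₖ κ) ∘ₖ κ = κ ∘ₖ κ
  rw [Kernel.id_comp]

section Invariant

variable {Ω : Type*} [MeasurableSpace Ω] {κ : Kernel Ω Ω} {π : Measure Ω} {A : Set Ω}

lemma comp_measure_eq_self_of_invariant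
    (hinv : ∀ B : Set Ω, MeasurableSet B → π B = ∫⁻ x, κ x B ∂π) : κ ∘ₘ π = π := by
  ext B hB
  rw [Measure.bind_apply hB κ.aemeasurable]
  exact (hinv B hB).symm

lemma lintegral_lintegral_kernel_of_invariant
    (hinv : ∀ B : Set Ω, MeasurableSet B → π B = ∫⁻ x, κ x B ∂π) {f : Ω → ℝ≥0∞}
    (hf : Measurable f) : ∫⁻ x, ∫⁻ y, f y ∂κ x ∂π = ∫⁻ x, f x ∂π := by
  conv_rhs => rw [← comp_measure_eq_self_of_invariant hinv]
  rw [Measure.lintegral_bind κ.aemeasurable hf.aemeasurable]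

lemma setLIntegral_kernel_le_measure [IsMarkovKernel κ] (μ : Measure Ω) (s t : Set Ω) :
    ∫⁻ y in s, κ y t ∂μ ≤ μ s :=
  (lintegral_mono fun _ => prob_le_one).trans_eq (setLIntegral_one s)

lemma setLIntegral_compl_kernel_eq_of_invariant [IsMarkovKernel κ] [IsFiniteMeasure π]
    (hinv : ∀ B : Set Ω, MeasurableSet B → π B = ∫⁻ x, κ x B ∂π) (hA : MeasurableSet A) :
    ∫⁻ x in Aᶜ, κ x A ∂π = ∫⁻ x in A, κ x Aᶜ ∂π := by
  have h_in : ∫⁻ x in A, κ x A ∂π + ∫⁻ x in Aᶜ, κ x A ∂π = π A := by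
    rw [lintegral_add_compl _ hA, hinv A hA]
  have h_out : ∫⁻ x in A, κ x A ∂π + ∫⁻ x in A, κ x Aᶜ ∂π = π A := by
    rw [← lintegral_add_left (κ.measurable_coe hA)]
    simp_rw [prob_add_prob_compl hA]
    exact setLIntegral_one A
  have h_fin : ∫⁻ x in A, κ x A ∂π ≠ ∞ :=
    ne_top_of_le_ne_top (measure_ne_top π A) (setLIntegral_kernel_le_measure π A A)
  exact (ENNReal.add_right_inj h_fin).mp (h_in.trans h_out.symm)

variable [IsMarkovKernel κ]

lemma kernel_compl_add_indicator_le_one (hA : MeasurableSet A) (y : Ω) :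
    κ y Aᶜ + Aᶜ.indicator (fun y => κ y A) y ≤ 1 := by
  by_cases hy : y ∈ Aᶜ
  · rw [Set.indicator_of_mem hy, add_comm, prob_add_prob_compl hA]
  · rw [Set.indicator_of_notMem hy, add_zero]
    exact prob_le_one

/-- Given `X₀ = x`, the three events of the header have probabilities at most `1` in total. -/
lemma two_step_crossings_le_one (hA : MeasurableSet A) (x : Ω) :
    A.indicator (fun x => (κ ∘ₖ κ) x Aᶜ) x + Aᶜ.indicator (fun x => κ x A) x
      + ∫⁻ y in Aᶜ, κ y A ∂κ x ≤ 1 := by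
  by_cases hx : x ∈ A
  · rw [Set.indicator_of_mem hx, Set.indicator_of_notMem (Set.notMem_compl_iff.mpr hx),
      add_zero, Kernel.comp_apply' _ _ _ hA.compl, ← lintegral_indicator hA.compl,
      ← lintegral_add_left (κ.measurable_coe hA.compl)]
    exact (lintegral_mono (kernel_compl_add_indicator_le_one hA)).trans_eq (by simp)
  · rw [Set.indicator_of_notMem hx, Set.indicator_of_mem (Set.mem_compl hx), zero_add]
    calc κ x A + ∫⁻ y in Aᶜ, κ y A ∂κ x ≤ κ x A + κ x Aᶜ := by
          gcongr
          exact setLIntegral_kernel_le_measure _ _ _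
      _ = 1 := prob_add_prob_compl hA

lemma setLIntegral_comp_add_two_mul_le_one [IsProbabilityMeasure π]
    (hinv : ∀ B : Set Ω, MeasurableSet B → π B = ∫⁻ x, κ x B ∂π) (hA : MeasurableSet A) :
    ∫⁻ x in A, (κ ∘ₖ κ) x Aᶜ ∂π + 2 * ∫⁻ x in A, κ x Aᶜ ∂π ≤ 1 := by
  have hA_meas : Measurable fun x => κ x A := κ.measurable_coe hA
  have h_back : ∫⁻ x, ∫⁻ y in Aᶜ, κ y A ∂κ x ∂π = ∫⁻ x in A, κ x Aᶜ ∂π := by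
    simp_rw [← lintegral_indicator hA.compl]
    rw [lintegral_lintegral_kernel_of_invariant hinv (hA_meas.indicator hA.compl),
      lintegral_indicator hA.compl, setLIntegral_compl_kernel_eq_of_invariant hinv hA]
  calc ∫⁻ x in A, (κ ∘ₖ κ) x Aᶜ ∂π + 2 * ∫⁻ x in A, κ x Aᶜ ∂π
      = ∫⁻ x, (A.indicator (fun x => (κ ∘ₖ κ) x Aᶜ) x + Aᶜ.indicator (fun x => κ x A) x
          + ∫⁻ y in Aᶜ, κ y A ∂κ x) ∂π := by
        rw [lintegral_add_right _ (hA_meas.setLIntegral_kernel hA.compl),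
          lintegral_add_right _ (hA_meas.indicator hA.compl), lintegral_indicator hA,
          lintegral_indicator hA.compl, setLIntegral_compl_kernel_eq_of_invariant hinv hA,
          h_back, two_mul, add_assoc]
    _ ≤ ∫⁻ _, 1 ∂π := lintegral_mono (two_step_crossings_le_one hA)
    _ = 1 := by simp

end Invariant

/-- `π(A)π(Aᶜ) k₂(A) ≤ 1 − 2∫_A p(x,Aᶜ) π(dx)`. -/
theorem two_step_upper_bound {Ω : Type*} [MeasurableSpace Ω] (κ : Kernel Ω Ω)
    [IsMarkovKernel κ] (π : Measure Ω) [IsProbabilityMeasure π]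
    (hinv : ∀ B : Set Ω, MeasurableSet B → π B = ∫⁻ x, κ x B ∂π)
    (A : Set Ω) (hA : MeasurableSet A) (h0 : 0 < π A) (h1 : π A < 1) :
    (π A).toReal * (π Aᶜ).toReal * isoQ (kpow κ 2) π A ≤ 1 - 2 * flow κ π A := by
  have h_bound := setLIntegral_comp_add_two_mul_le_one hinv hA
  rw [← kpow_two] at h_bound
  set Q := ∫⁻ x in A, kpow κ 2 x Aᶜ ∂π
  set F := ∫⁻ x in A, κ x Aᶜ ∂π
  have hQ : Q ≠ ∞ := ne_top_of_le_ne_top ENNReal.one_ne_top (le_self_add.trans h_bound)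
  have h2F : 2 * F ≠ ∞ := ne_top_of_le_ne_top ENNReal.one_ne_top (le_add_self.trans h_bound)
  have hπA : (π A).toReal ≠ 0 := ENNReal.toReal_ne_zero.mpr ⟨h0.ne', measure_ne_top π A⟩
  have hπAc : (π Aᶜ).toReal ≠ 0 := by
    refine ENNReal.toReal_ne_zero.mpr ⟨?_, measure_ne_top π Aᶜ⟩
    rw [Ne, prob_compl_eq_zero_iff hA]
    exact h1.ne
  have h_real := ENNReal.toReal_mono ENNReal.one_ne_top h_bound
  rw [ENNReal.toReal_add hQ h2F, ENNReal.toReal_mul, ENNReal.toReal_ofNat,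
    ENNReal.toReal_one] at h_real
  calc (π A).toReal * (π Aᶜ).toReal * isoQ (kpow κ 2) π A = Q.toReal := by
        rw [isoQ, flow, mul_div_cancel₀ _ (mul_ne_zero hπA hπAc)]
    _ ≤ 1 - 2 * flow κ π A := by
        rw [flow]
        linarith
end

section
/- Let H_ε := {y ∈ Aᶜ : p(y, Aᶜ) ≥ ε} for 0 < ε < 1. Then π(H_εᶜ ∩ Aᶜ) ≤ π(A)/(1 − ε). -/
/-! Outside `A ∪ H_ε` the chain enters `A` in one step with probability more than `1 - ε`, so
by Markov's inequality `(1 - ε) π(H_εᶜ ∩ Aᶜ) ≤ ∫_{Aᶜ} p(y, A) π(dy)`. Reversibility turns this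
flow into `A` into the flow `∫_A p(x, Aᶜ) π(dx)` out of `A`, which is at most `π(A)`. -/

open MeasureTheory ProbabilityTheory

lemma setLIntegral_kernel_le_measure_s11 {α β : Type*} [MeasurableSpace α] [MeasurableSpace β]
    (κ : Kernel α β) [IsMarkovKernel κ] (π : Measure α) (A : Set α) (B : Set β) : ∫⁻ x in A, κ x B ∂π ≤ π A :=
  (lintegral_mono fun _ => prob_le_one).trans_eq (setLIntegral_one A)

section

variable {Ω : Type*} [MeasurableSpace Ω]

lemma one_sub_le_measureReal_of_measureReal_compl_lt {μ : Measure Ω} [IsProbabilityMeasure μ]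
    {s : Set Ω} (hs : MeasurableSet s) {ε : ℝ} (h : μ.real sᶜ < ε) : 1 - ε ≤ μ.real s := by
  rw [probReal_compl_eq_one_sub hs] at h
  linarith

namespace Reversible

variable {κ : Kernel Ω Ω} [IsMarkovKernel κ] {π : Measure Ω} {A : Set Ω}

lemma setLIntegral_compl_le_measure (hrev : Reversible κ π) (hA : MeasurableSet A) :
    ∫⁻ y in Aᶜ, κ y A ∂π ≤ π A :=
  hrev Aᶜ A hA.compl hA ▸ setLIntegral_kernel_le_measure_s11 κ π A Aᶜ

lemma mul_measure_compl_inter_le (hrev : Reversible κ π) (hA : MeasurableSet A) (c : ENNReal) :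
    c * π ({y | c ≤ κ y A} ∩ Aᶜ) ≤ π A :=
  calc c * π ({y | c ≤ κ y A} ∩ Aᶜ)
      ≤ c * π.restrict Aᶜ {y | c ≤ κ y A} :=
        mul_le_mul_right (Measure.le_restrict_apply _ _) c
    _ ≤ ∫⁻ y in Aᶜ, κ y A ∂π := mul_meas_ge_le_lintegral₀ (κ.measurable_coe hA).aemeasurable c
    _ ≤ π A := hrev.setLIntegral_compl_le_measure hA

end Reversible

end

theorem measure_H_compl_inter_le_general {Ω : Type*} [MeasurableSpace Ω] (κ : Kernel Ω Ω)
    [IsMarkovKernel κ] (π : Measure Ω) [IsProbabilityMeasure π]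
    (hrev : Reversible κ π)
    (A : Set Ω) (hA : MeasurableSet A)
    (ε : ℝ) (hε1 : ε < 1) :
    (π ({y ∈ Aᶜ | ε ≤ (κ y Aᶜ).toReal}ᶜ ∩ Aᶜ)).toReal ≤ (π A).toReal / (1 - ε) := by
  set S := {y ∈ Aᶜ | ε ≤ (κ y Aᶜ).toReal}ᶜ ∩ Aᶜ
  have hS : S ⊆ {y | ENNReal.ofReal (1 - ε) ≤ κ y A} ∩ Aᶜ := by
    rintro y ⟨hy, hyA⟩
    have hlt : (κ y).real Aᶜ < ε := not_le.mp fun h => hy ⟨hyA, h⟩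
    exact ⟨ENNReal.ofReal_le_of_le_toReal
      (one_sub_le_measureReal_of_measureReal_compl_lt hA hlt), hyA⟩
  have hmarkov : ENNReal.ofReal (1 - ε) * π S ≤ π A :=
    (mul_le_mul_right (measure_mono hS) _).trans (hrev.mul_measure_compl_inter_le hA _)
  have hreal : (1 - ε) * (π S).toReal ≤ (π A).toReal := by
    simpa [ENNReal.toReal_mul, ENNReal.toReal_ofReal (sub_pos.2 hε1).le] using
      ENNReal.toReal_mono (measure_ne_top π A) hmarkov
  rw [le_div_iff₀ (sub_pos.2 hε1)]
  linarith

/-- With `H_ε := {y ∈ Aᶜ : p(y, Aᶜ) ≥ ε}`, one has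
`π(H_εᶜ ∩ Aᶜ) ≤ π(A)/(1 − ε)`. -/
theorem measure_H_compl_inter_le {Ω : Type*} [MeasurableSpace Ω] (κ : Kernel Ω Ω)
    [IsMarkovKernel κ] (π : Measure Ω) [IsProbabilityMeasure π]
    (hinv : ∀ B : Set Ω, MeasurableSet B → π B = ∫⁻ x, κ x B ∂π)
    (hrev : Reversible κ π)
    (A : Set Ω) (hA : MeasurableSet A) (h0 : 0 < π A) (h1 : π A < 1)
    (ε : ℝ) (hε : 0 < ε) (hε1 : ε < 1) :
    (π ({y ∈ Aᶜ | ε ≤ (κ y Aᶜ).toReal}ᶜ ∩ Aᶜ)).toReal ≤ (π A).toReal / (1 - ε) :=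
  measure_H_compl_inter_le_general κ π hrev A hA ε hε1
end

section
/- Let H_ε := {y ∈ Aᶜ : p(y, Aᶜ) ≥ ε} and L := (1/(π(A)π(Aᶜ))) ∫_A p(x, H_ε) π(dx). Then L ≥ π(H_ε)·k − ε·π(H_εᶜ ∩ Aᶜ)/π(A), where k := inf over measurable sets of the isoperimetric quantity. -/
/-!
Since `H_ε ⊆ Aᶜ`, the complement `H_εᶜ` splits into `A` and `G := H_εᶜ ∩ Aᶜ`, so by
reversibility the flow out of `H_ε` is `∫_A p(x, H_ε) + ∫_G p(x, H_ε)`. On `G` one has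
`p(x, H_ε) ≤ p(x, Aᶜ) < ε`, so the second term is at most `ε π(G)`, while the flow out of `H_ε`
is at least `k π(H_ε) π(H_εᶜ) ≥ k π(H_ε) π(A)`. Dividing by `π(A)` and then by `π(Aᶜ) ≤ 1`
gives the bound.
-/

open MeasureTheory ProbabilityTheory

section

variable {Ω : Type*} [MeasurableSpace Ω] {κ : Kernel Ω Ω} {π : Measure Ω}

lemma kpow_one (κ : Kernel Ω Ω) : kpow κ 1 = κ :=
  Kernel.id_comp κ

lemma isoQ_nonneg (κ : Kernel Ω Ω) (π : Measure Ω) (B : Set Ω) : 0 ≤ isoQ κ π B := by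
  unfold isoQ flow
  positivity

lemma kinfN_nonneg (κ : Kernel Ω Ω) (π : Measure Ω) (n : ℕ) : 0 ≤ kinfN κ π n :=
  Real.sInf_nonneg <| by
    rintro _ ⟨B, -, rfl⟩
    exact isoQ_nonneg _ _ _

lemma kinfN_one_le_isoQ {B : Set Ω} (hB : MeasurableSet B) (h0 : 0 < π B) (h1 : π B < 1) :
    kinfN κ π 1 ≤ isoQ κ π B := by
  refine csInf_le ⟨0, ?_⟩ ⟨B, ⟨hB, h0, h1⟩, by rw [kpow_one]⟩
  rintro _ ⟨C, -, rfl⟩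
  exact isoQ_nonneg _ _ _

lemma kinfN_one_mul_le_flow {B : Set Ω} (hB : MeasurableSet B) (h0 : 0 < π B) (h1 : π B < 1) :
    kinfN κ π 1 * ((π B).toReal * (π Bᶜ).toReal) ≤ flow κ π B := by
  rcases (by positivity : 0 ≤ (π B).toReal * (π Bᶜ).toReal).eq_or_lt with hD | hD
  · rw [← hD, mul_zero]
    exact ENNReal.toReal_nonneg
  · exact (le_div_iff₀ hD).1 (kinfN_one_le_isoQ hB h0 h1)

lemma setLIntegral_kernel_ne_top [IsFiniteKernel κ] [IsFiniteMeasure π] (S B : Set Ω) :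
    ∫⁻ x in S, κ x B ∂π ≠ ⊤ :=
  (setLIntegral_lt_top_of_le_nnreal (measure_ne_top π S) ⟨κ.bound.toNNReal, fun x _ => by
    rw [ENNReal.coe_toNNReal κ.bound_ne_top]
    exact κ.measure_le_bound x B⟩).ne

namespace Reversible

lemma lintegral_compl_eq_add (hrev : Reversible κ π) {A H : Set Ω} (hA : MeasurableSet A)
    (hH : MeasurableSet H) (hHA : H ⊆ Aᶜ) :
    ∫⁻ x in H, κ x Hᶜ ∂π = ∫⁻ x in A, κ x H ∂π + ∫⁻ x in Hᶜ ∩ Aᶜ, κ x H ∂π := by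
  have hsplit : Hᶜ = A ∪ (Hᶜ ∩ Aᶜ) := by
    rw [Set.union_inter_distrib_left, Set.union_compl_self, Set.inter_univ]
    exact (Set.union_eq_right.2 fun x hx hxH => hHA hxH hx).symm
  have hdisj : Disjoint A (Hᶜ ∩ Aᶜ) := Set.disjoint_left.2 fun _ hx hxG => hxG.2 hx
  have hG : MeasurableSet (Hᶜ ∩ Aᶜ) := hH.compl.inter hA.compl
  calc ∫⁻ x in H, κ x Hᶜ ∂π = ∫⁻ x in H, (κ x A + κ x (Hᶜ ∩ Aᶜ)) ∂π :=
        lintegral_congr fun x => (congrArg (κ x) hsplit).trans (measure_union hdisj hG)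
    _ = ∫⁻ x in A, κ x H ∂π + ∫⁻ x in Hᶜ ∩ Aᶜ, κ x H ∂π := by
        rw [lintegral_add_left (κ.measurable_coe hA), hrev H A hH hA, hrev H _ hH hG]

lemma kinfN_mul_sub_le_lintegral [IsFiniteKernel κ] [IsFiniteMeasure π]
    (hrev : Reversible κ π) {A H : Set Ω} (hA : MeasurableSet A) (hH : MeasurableSet H)
    (hHA : H ⊆ Aᶜ) (h0 : 0 < π H) (h1 : π H < 1) {ε : ℝ} (hε : 0 ≤ ε)
    (hentry : ∀ x ∈ Hᶜ ∩ Aᶜ, κ x H ≤ ENNReal.ofReal ε) :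
    kinfN κ π 1 * (π H).toReal * (π A).toReal - ε * (π (Hᶜ ∩ Aᶜ)).toReal ≤
      (∫⁻ x in A, κ x H ∂π).toReal := by
  have hflow : flow κ π H =
      (∫⁻ x in A, κ x H ∂π).toReal + (∫⁻ x in Hᶜ ∩ Aᶜ, κ x H ∂π).toReal := by
    rw [flow, hrev.lintegral_compl_eq_add hA hH hHA,
      ENNReal.toReal_add (setLIntegral_kernel_ne_top _ _) (setLIntegral_kernel_ne_top _ _)]
  have hentry_le : (∫⁻ x in Hᶜ ∩ Aᶜ, κ x H ∂π).toReal ≤ ε * (π (Hᶜ ∩ Aᶜ)).toReal := by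
    have := setLIntegral_mono (μ := π) measurable_const hentry
    rw [setLIntegral_const] at this
    simpa [ENNReal.toReal_mul, ENNReal.toReal_ofReal hε] using
      ENNReal.toReal_mono (ENNReal.mul_ne_top ENNReal.ofReal_ne_top (measure_ne_top _ _)) this
  have hA_le : (π A).toReal ≤ (π Hᶜ).toReal :=
    ENNReal.toReal_mono (measure_ne_top _ _)
      (measure_mono fun x hx hxH => hHA hxH hx)
  have hk : kinfN κ π 1 * (π H).toReal * (π A).toReal ≤
      kinfN κ π 1 * (π H).toReal * (π Hᶜ).toReal :=
    mul_le_mul_of_nonneg_left hA_le (mul_nonneg (kinfN_nonneg _ _ _) ENNReal.toReal_nonneg)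
  have hiso := kinfN_one_mul_le_flow (κ := κ) hH h0 h1
  rw [hflow] at hiso
  linarith

end Reversible

end

theorem flow_into_H_lower_bound_general {Ω : Type*} [MeasurableSpace Ω] (κ : Kernel Ω Ω)
    [IsMarkovKernel κ] (π : Measure Ω) [IsProbabilityMeasure π]
    (hrev : Reversible κ π)
    (A : Set Ω) (hA : MeasurableSet A) (h0 : 0 < π A) (h1 : π A < 1)
    (ε : ℝ) (hε : 0 < ε)
    (hH : 0 < π {y ∈ Aᶜ | ε ≤ (κ y Aᶜ).toReal}) :
    (∫⁻ x in A, κ x {y ∈ Aᶜ | ε ≤ (κ y Aᶜ).toReal} ∂π).toReal /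
        ((π A).toReal * (π Aᶜ).toReal) ≥
      (π {y ∈ Aᶜ | ε ≤ (κ y Aᶜ).toReal}).toReal * kinfN κ π 1 -
        ε * (π ({y ∈ Aᶜ | ε ≤ (κ y Aᶜ).toReal}ᶜ ∩ Aᶜ)).toReal / (π A).toReal := by
  set H : Set Ω := {y ∈ Aᶜ | ε ≤ (κ y Aᶜ).toReal}
  have hHA : H ⊆ Aᶜ := fun _ hy => hy.1
  have hHm : MeasurableSet H :=
    hA.compl.inter (measurableSet_le measurable_const (κ.measurable_coe hA.compl).ennreal_toReal)
  have hH1 : π H < 1 := (measure_mono hHA).trans_lt <| by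
    rw [prob_compl_eq_one_sub hA]
    exact ENNReal.sub_lt_self ENNReal.one_ne_top one_ne_zero h0.ne'
  have hentry : ∀ x ∈ Hᶜ ∩ Aᶜ, κ x H ≤ ENNReal.ofReal ε := fun x ⟨hxH, hxA⟩ =>
    (measure_mono hHA).trans <| (ENNReal.le_ofReal_iff_toReal_le (measure_ne_top _ _) hε.le).2
      (not_le.1 fun h => hxH ⟨hxA, h⟩).le
  have hbound := hrev.kinfN_mul_sub_le_lintegral hA hHm hHA hH hH1 hε.le hentry
  have ha : 0 < (π A).toReal := ENNReal.toReal_pos h0.ne' (measure_ne_top _ _)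
  have hac : 0 < (π Aᶜ).toReal := ENNReal.toReal_pos
    (by rw [prob_compl_eq_one_sub hA]; exact (tsub_pos_of_lt h1).ne') (measure_ne_top _ _)
  calc (π H).toReal * kinfN κ π 1 - ε * (π (Hᶜ ∩ Aᶜ)).toReal / (π A).toReal
      ≤ (∫⁻ x in A, κ x H ∂π).toReal / (π A).toReal := by
        rw [le_div_iff₀ ha, sub_mul, div_mul_cancel₀ _ ha.ne']
        linarith
    _ ≤ (∫⁻ x in A, κ x H ∂π).toReal / ((π A).toReal * (π Aᶜ).toReal) :=
        div_le_div_of_nonneg_left ENNReal.toReal_nonneg (by positivity)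
          (mul_le_of_le_one_right ha.le measureReal_le_one)

/-- With `H_ε := {y ∈ Aᶜ : p(y, Aᶜ) ≥ ε}` and
`L := (1/(π(A)π(Aᶜ))) ∫_A p(x, H_ε) π(dx)`, one has
`L ≥ π(H_ε)·k − ε·π(H_εᶜ ∩ Aᶜ)/π(A)`. -/
theorem flow_into_H_lower_bound {Ω : Type*} [MeasurableSpace Ω] (κ : Kernel Ω Ω)
    [IsMarkovKernel κ] (π : Measure Ω) [IsProbabilityMeasure π]
    (hinv : ∀ B : Set Ω, MeasurableSet B → π B = ∫⁻ x, κ x B ∂π)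
    (hrev : Reversible κ π)
    (A : Set Ω) (hA : MeasurableSet A) (h0 : 0 < π A) (h1 : π A < 1)
    (ε : ℝ) (hε : 0 < ε) (hε1 : ε < 1)
    (hH : 0 < π {y ∈ Aᶜ | ε ≤ (κ y Aᶜ).toReal})
    (hU : π (A ∪ {y ∈ Aᶜ | ε ≤ (κ y Aᶜ).toReal}ᶜ) < 1) :
    (∫⁻ x in A, κ x {y ∈ Aᶜ | ε ≤ (κ y Aᶜ).toReal} ∂π).toReal /
        ((π A).toReal * (π Aᶜ).toReal) ≥
      (π {y ∈ Aᶜ | ε ≤ (κ y Aᶜ).toReal}).toReal * kinfN κ π 1 -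
        ε * (π ({y ∈ Aᶜ | ε ≤ (κ y Aᶜ).toReal}ᶜ ∩ Aᶜ)).toReal / (π A).toReal :=
  flow_into_H_lower_bound_general κ π hrev A hA h0 h1 ε hε hH
end

section
/- If f : ℝ_{>0}⁴ → ℝ is defined by f(δ,ε₁,ε₂,ε) := min[(k²/16)δ, (k/4)(ε₁ε₂(1−δ)−δ), ε(k((2−ε)(1−ε₁)(1−ε₂)(1−δ)/((1−ε)K) − 1/(1−ε)) − ε/(1−ε))] with constants 0 < k ≤ K < 2, then sup over δ,ε₁,ε₂,ε > 0 of f is strictly positive. -/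
open MeasureTheory ProbabilityTheory

open Filter Topology

theorem tendsto_third_factor {k K : ℝ} (hK : K ≠ 0) :
    Tendsto (fun t : ℝ => k * ((2 - t) * (1 - t) * (1 - t) * (1 - t ^ 2 / 2) / ((1 - t) * K) -
      1 / (1 - t)) - t / (1 - t)) (𝓝 0) (𝓝 (k * (2 / K - 1))) := by
  have hcont : ContinuousAt (fun t : ℝ => k * ((2 - t) * (1 - t) * (1 - t) * (1 - t ^ 2 / 2) /
      ((1 - t) * K) - 1 / (1 - t)) - t / (1 - t)) 0 := by
    fun_prop (disch := simp [hK])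
  simpa using hcont.tendsto

theorem second_factor_pos {t : ℝ} (ht₀ : 0 < t) (ht₁ : t < 1) :
    0 < t * t * (1 - t ^ 2 / 2) - t ^ 2 / 2 := by
  have : 0 < t ^ 2 * (1 - t ^ 2) := mul_pos (by positivity) (by nlinarith)
  linarith

/- The hint's choice `ε₁ = ε₂ = √(2δ/(1-δ))` is replaced by the simpler `ε₁ = ε₂ = ε = t`,
`δ = t²/2`; as `t → 0⁺` the third term is `t` times a factor tending to `k(2/K - 1) > 0`. -/
/-- For `0 < k ≤ K < 2`, the supremum over `δ,ε₁,ε₂,ε > 0` of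
the minimum of the three terms is strictly positive: there is a choice of the
parameters making all three terms positive. -/
theorem sup_min_pos (k K : ℝ) (hk : 0 < k) (hkK : k ≤ K) (hK : K < 2) :
    ∃ δ ε₁ ε₂ ε : ℝ, 0 < δ ∧ 0 < ε₁ ∧ 0 < ε₂ ∧ 0 < ε ∧
      0 < min (k ^ 2 / 16 * δ)
        (min (k / 4 * (ε₁ * ε₂ * (1 - δ) - δ))
          (ε * (k * ((2 - ε) * (1 - ε₁) * (1 - ε₂) * (1 - δ) / ((1 - ε) * K) -
              1 / (1 - ε)) -
            ε / (1 - ε)))) := by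
  have hK₀ : 0 < K := hk.trans_le hkK
  have hlim : 0 < k * (2 / K - 1) := mul_pos hk (by rw [sub_pos, one_lt_div hK₀]; exact hK)
  have hthird := (tendsto_third_factor (k := k) hK₀.ne').eventually (eventually_gt_nhds hlim)
  have hsmall : ∀ᶠ t in 𝓝[>] (0 : ℝ), t ∈ Set.Ioo 0 1 := Ioo_mem_nhdsGT one_pos
  obtain ⟨t, ⟨ht₀, ht₁⟩, hpos⟩ := (hsmall.and (hthird.filter_mono nhdsWithin_le_nhds)).exists
  exact ⟨t ^ 2 / 2, t, t, t, by positivity, ht₀, ht₀, ht₀, lt_min (by positivity)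
    (lt_min (mul_pos (by positivity) (second_factor_pos ht₀ ht₁)) (mul_pos ht₀ hpos))⟩
end
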